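/- arXiv:2503.02590 — 4 statements merged into one kernel-verified Lean document; each statement's English description precedes it below -/
import Mathlib

section
/- Let v₀ ∈ H^s(ℝⁿ) with s > 0 and suppose the decay character r*(v₀) exists. Then the decay character of Λ^s v₀ exists, satisfies -n/2 + s < r*(Λ^s v₀) < ∞, and r*(Λ^s v₀) = s + r*(v₀), where Λ = (-Δ)^{1/2}. -/
/-!
Write `h = ‖v̂₀‖²` and `F ρ = ∫_{B(ρ)} h`. The layer-cake formula gives
`∫_{B(ρ)} ‖ξ‖^{2s} h = ρ^{2s} F ρ - 2s ∫₀^ρ t^{2s-1} F t dt`. After multiplying by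
`ρ^{-(β+2s)}`, where `β = 2r + n`, the first term is `ρ^{-β} F ρ → P`, and the second is
`2s` times a weighted Cesàro mean of `t^{-β} F t`, which tends to `P / (β + 2s)`. Hence the
decay indicator of `Λ^s v₀` at `s + r` tends to `β P / (β + 2s) > 0`.
-/

open MeasureTheory Filter Set Topology Metric

theorem integral_Ioc_rpow_sub_one {p x : ℝ} (hp : 0 < p) (hx : 0 ≤ x) :
    ∫ t in Ioc 0 x, t ^ (p - 1) = x ^ p / p := by
  rw [← intervalIntegral.integral_of_le hx, integral_rpow (Or.inl (by linarith)),
    sub_add_cancel, Real.zero_rpow hp.ne', sub_zero]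

theorem integrableOn_Ioc_rpow_sub_one {p : ℝ} (hp : 0 < p) (x : ℝ) :
    IntegrableOn (fun t : ℝ => t ^ (p - 1)) (Ioc 0 x) :=
  (intervalIntegral.intervalIntegrable_rpow' (by linarith)).1

theorem tendsto_rpow_neg_mul_setIntegral_Ioc_rpow_mul {α P : ℝ} {g : ℝ → ℝ} (hα : 0 < α)
    (hint : IntegrableOn (fun t => t ^ (α - 1) * g t) (Ioc 0 1))
    (hg : Tendsto g (𝓝[>] 0) (𝓝 P)) :
    Tendsto (fun ρ => ρ ^ (-α) * ∫ t in Ioc 0 ρ, t ^ (α - 1) * g t) (𝓝[>] 0)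
      (𝓝 (P / α)) := by
  have hsplit : ∀ ρ ∈ Ioc (0 : ℝ) 1, ρ ^ (-α) * ∫ t in Ioc 0 ρ, t ^ (α - 1) * g t
      = P / α + ρ ^ (-α) * ∫ t in Ioc 0 ρ, t ^ (α - 1) * (g t - P) := by
    intro ρ hρ
    simp only [mul_sub]
    rw [integral_sub (hint.mono_set (Ioc_subset_Ioc_right hρ.2))
      ((integrableOn_Ioc_rpow_sub_one hα ρ).mul_const P), integral_mul_const,
      integral_Ioc_rpow_sub_one hα hρ.1.le, Real.rpow_neg hρ.1.le]
    have := (Real.rpow_pos_of_pos hρ.1 α).ne'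
    field_simp
    ring
  suffices h0 : Tendsto (fun ρ => ρ ^ (-α) * ∫ t in Ioc 0 ρ, t ^ (α - 1) * (g t - P))
      (𝓝[>] 0) (𝓝 0) by
    rw [← add_zero (P / α)]
    refine (h0.const_add _).congr' ?_
    filter_upwards [Ioc_mem_nhdsGT zero_lt_one] with ρ hρ using (hsplit ρ hρ).symm
  rw [Metric.tendsto_nhds]
  intro ε hε
  obtain ⟨δ, hδ, hclose⟩ : ∃ δ > 0, ∀ t ∈ Ioo 0 δ, |g t - P| < ε * α / 2 := by
    obtain ⟨δ, hδ, hsub⟩ := mem_nhdsGT_iff_exists_Ioo_subset.1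
      (Metric.tendsto_nhds.1 hg (ε * α / 2) (by positivity))
    exact ⟨δ, hδ, fun t ht => by simpa [Real.dist_eq] using hsub ht⟩
  filter_upwards [Ioo_mem_nhdsGT hδ] with ρ hρ
  have hbound : ‖∫ t in Ioc 0 ρ, t ^ (α - 1) * (g t - P)‖
      ≤ ∫ t in Ioc 0 ρ, t ^ (α - 1) * (ε * α / 2) := by
    refine norm_integral_le_of_norm_le ((integrableOn_Ioc_rpow_sub_one hα ρ).mul_const _)
      ((ae_restrict_iff' measurableSet_Ioc).2 (Eventually.of_forall fun t ht => ?_))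
    rw [norm_mul, Real.norm_of_nonneg (Real.rpow_nonneg ht.1.le _)]
    exact mul_le_mul_of_nonneg_left (hclose t ⟨ht.1, ht.2.trans_lt hρ.2⟩).le
      (Real.rpow_nonneg ht.1.le _)
  rw [integral_mul_const, integral_Ioc_rpow_sub_one hα hρ.1.le] at hbound
  have hρα : 0 < ρ ^ α := Real.rpow_pos_of_pos hρ.1 α
  calc dist (ρ ^ (-α) * ∫ t in Ioc 0 ρ, t ^ (α - 1) * (g t - P)) 0
      = (ρ ^ α)⁻¹ * ‖∫ t in Ioc 0 ρ, t ^ (α - 1) * (g t - P)‖ := by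
        rw [dist_zero_right, norm_mul, Real.rpow_neg hρ.1.le,
          Real.norm_of_nonneg (inv_nonneg.2 hρα.le)]
    _ ≤ (ρ ^ α)⁻¹ * (ρ ^ α / α * (ε * α / 2)) := by gcongr
    _ < ε := by field_simp; linarith

theorem tendsto_rpow_neg_mul_layerCake {F : ℝ → ℝ} {β p P : ℝ}
    (hβp : 0 < β + p) (hint : IntegrableOn (fun t => t ^ (p - 1) * F t) (Ioc 0 1))
    (hF : Tendsto (fun ρ => ρ ^ (-β) * F ρ) (𝓝[>] 0) (𝓝 P)) :
    Tendsto (fun ρ => ρ ^ (-(β + p)) * (ρ ^ p * F ρ - p * ∫ t in Ioc 0 ρ, t ^ (p - 1) * F t))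
      (𝓝[>] 0) (𝓝 (β / (β + p) * P)) := by
  have hweight : ∀ t : ℝ, 0 < t → t ^ (β + p - 1) * (t ^ (-β) * F t) = t ^ (p - 1) * F t := by
    intro t ht
    rw [← mul_assoc, ← Real.rpow_add ht]
    ring_nf
  have hces := tendsto_rpow_neg_mul_setIntegral_Ioc_rpow_mul hβp
    (hint.congr_fun (fun t ht => (hweight t ht.1).symm) measurableSet_Ioc) hF
  have hlim : β / (β + p) * P = P - p * (P / (β + p)) := by field_simp; ring
  rw [hlim]
  refine (hF.sub (hces.const_mul p)).congr' ?_
  filter_upwards [self_mem_nhdsWithin] with ρ (hρ : 0 < ρ)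
  have hpow : ρ ^ (-(β + p)) * ρ ^ p = ρ ^ (-β) := by rw [← Real.rpow_add hρ]; ring_nf
  rw [setIntegral_congr_fun measurableSet_Ioc (fun t ht => hweight t ht.1)]
  linear_combination (-F ρ) * hpow

section BallIntegral

variable {E : Type*} [NormedAddCommGroup E] [MeasurableSpace E] {μ : Measure E} {h : E → ℝ}

noncomputable def ballIntegral (μ : Measure E) (h : E → ℝ) (ρ : ℝ) : ℝ :=
  ∫ ξ in closedBall 0 ρ, h ξ ∂μ

theorem ballIntegral_mono (hh : Integrable h μ) (h0 : 0 ≤ h) : Monotone (ballIntegral μ h) :=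
  fun _ _ hle => setIntegral_mono_set hh.integrableOn (ae_of_all _ h0)
    (closedBall_subset_closedBall hle).eventuallyLE

theorem ballIntegral_nonneg (h0 : 0 ≤ h) (ρ : ℝ) : 0 ≤ ballIntegral μ h ρ :=
  integral_nonneg h0

theorem integrableOn_rpow_mul_ballIntegral (hh : Integrable h μ) (h0 : 0 ≤ h) {p : ℝ}
    (hp : 0 < p) (ρ : ℝ) :
    IntegrableOn (fun t => t ^ (p - 1) * ballIntegral μ h t) (Ioc 0 ρ) := by
  refine (integrableOn_Ioc_rpow_sub_one hp ρ).mul_bdd (c := ballIntegral μ h ρ)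
    (ballIntegral_mono hh h0).measurable.aestronglyMeasurable
    ((ae_restrict_iff' measurableSet_Ioc).2 (Eventually.of_forall fun t ht => ?_))
  rw [Real.norm_of_nonneg (ballIntegral_nonneg h0 t)]
  exact ballIntegral_mono hh h0 ht.2

variable [OpensMeasurableSpace E]

theorem integrableOn_closedBall_norm_rpow_mul (hh : Integrable h μ) {p : ℝ} (hp : 0 < p)
    (ρ : ℝ) : IntegrableOn (fun ξ => ‖ξ‖ ^ p * h ξ) (closedBall 0 ρ) μ := by
  refine hh.integrableOn.bdd_mul (c := ρ ^ p) (measurable_norm.pow_const p).aestronglyMeasurable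
    ((ae_restrict_iff' measurableSet_closedBall).2 (Eventually.of_forall fun ξ hξ => ?_))
  rw [Real.norm_of_nonneg (Real.rpow_nonneg (norm_nonneg ξ) p)]
  exact Real.rpow_le_rpow (norm_nonneg ξ) (mem_closedBall_zero_iff.1 hξ) hp.le

-- For `ρ < t` both sides vanish, the right one because `ENNReal.ofReal` truncates at `0`.
theorem withDensity_closedBall_norm_gt (hh : Integrable h μ) (h0 : 0 ≤ h) (ρ t : ℝ) :
    (μ.restrict (closedBall 0 ρ)).withDensity (fun ξ => ENNReal.ofReal (h ξ)) {ξ | t < ‖ξ‖}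
      = ENNReal.ofReal (ballIntegral μ h ρ - ballIntegral μ h t) := by
  have hS : MeasurableSet {ξ : E | t < ‖ξ‖} := measurableSet_lt measurable_const measurable_norm
  have hannulus : {ξ : E | t < ‖ξ‖} ∩ closedBall 0 ρ = closedBall 0 ρ \ closedBall 0 t := by
    ext ξ
    simp only [mem_inter_iff, mem_ofPred_eq, Set.mem_sdiff, mem_closedBall_zero_iff, not_le]
    tauto
  rw [withDensity_apply _ hS, Measure.restrict_restrict hS, hannulus,
    ← ofReal_integral_eq_lintegral_ofReal hh.integrableOn (ae_of_all _ h0)]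
  rcases le_or_gt t ρ with htρ | hρt
  · rw [setIntegral_sdiff measurableSet_closedBall hh.integrableOn
      (closedBall_subset_closedBall htρ)]
    rfl
  · rw [sdiff_eq_empty.2 (closedBall_subset_closedBall hρt.le), Measure.restrict_empty,
      integral_zero_measure, ENNReal.ofReal_zero,
      ENNReal.ofReal_of_nonpos (sub_nonpos.2 (ballIntegral_mono hh h0 hρt.le))]

theorem setLIntegral_Ioi_withDensity_closedBall_norm_gt (hh : Integrable h μ) (h0 : 0 ≤ h)
    {p : ℝ} (hp : 0 < p) {ρ : ℝ} (hρ : 0 ≤ ρ) :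
    ∫⁻ t in Ioi 0, (μ.restrict (closedBall 0 ρ)).withDensity (fun ξ => ENNReal.ofReal (h ξ))
        {ξ | t < ‖ξ‖} * ENNReal.ofReal (t ^ (p - 1))
      = ENNReal.ofReal
          (∫ t in Ioc 0 ρ, t ^ (p - 1) * (ballIntegral μ h ρ - ballIntegral μ h t)) := by
  set F := ballIntegral μ h
  have hint : IntegrableOn (fun t => t ^ (p - 1) * (F ρ - F t)) (Ioc 0 ρ) := by
    simp only [mul_sub]
    exact ((integrableOn_Ioc_rpow_sub_one hp ρ).mul_const (F ρ)).sub
      (integrableOn_rpow_mul_ballIntegral hh h0 hp ρ)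
  have hnonneg : ∀ t ∈ Ioc 0 ρ, 0 ≤ t ^ (p - 1) * (F ρ - F t) := fun t ht =>
    mul_nonneg (Real.rpow_nonneg ht.1.le _) (sub_nonneg.2 (ballIntegral_mono hh h0 ht.2))
  have htail : ∀ t ∈ Ioi ρ, (μ.restrict (closedBall 0 ρ)).withDensity
      (fun ξ => ENNReal.ofReal (h ξ)) {ξ | t < ‖ξ‖} * ENNReal.ofReal (t ^ (p - 1)) = 0 := by
    intro t ht
    rw [withDensity_closedBall_norm_gt hh h0, ENNReal.ofReal_of_nonpos
      (sub_nonpos.2 (ballIntegral_mono hh h0 (le_of_lt ht))), zero_mul]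
  rw [← Ioc_union_Ioi_eq_Ioi hρ, lintegral_union measurableSet_Ioi Ioc_disjoint_Ioi_same,
    setLIntegral_congr_fun measurableSet_Ioi htail, lintegral_zero, add_zero,
    ofReal_integral_eq_lintegral_ofReal hint
      ((ae_restrict_iff' measurableSet_Ioc).2 (Eventually.of_forall hnonneg))]
  refine setLIntegral_congr_fun measurableSet_Ioc fun t ht => ?_
  rw [withDensity_closedBall_norm_gt hh h0, mul_comm, ENNReal.ofReal_mul
    (Real.rpow_nonneg ht.1.le _)]

theorem setIntegral_closedBall_norm_rpow_mul_eq_layerCake (hh : Integrable h μ) (h0 : 0 ≤ h)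
    {p : ℝ} (hp : 0 < p) {ρ : ℝ} (hρ : 0 ≤ ρ) :
    ∫ ξ in closedBall 0 ρ, ‖ξ‖ ^ p * h ξ ∂μ
      = p * ∫ t in Ioc 0 ρ, t ^ (p - 1) * (ballIntegral μ h ρ - ballIntegral μ h t) := by
  set ν := (μ.restrict (closedBall 0 ρ)).withDensity (fun ξ => ENNReal.ofReal (h ξ))
  have hlayer := lintegral_comp_eq_lintegral_meas_lt_mul ν (ae_of_all _ fun ξ => norm_nonneg ξ)
    measurable_norm.aemeasurable
    (fun _ _ => intervalIntegral.intervalIntegrable_rpow' (r := p - 1) (by linarith))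
    ((ae_restrict_iff' measurableSet_Ioi).2 (Eventually.of_forall fun t ht =>
      Real.rpow_nonneg (le_of_lt ht) _))
  have hlhs : ∫⁻ ξ, ENNReal.ofReal (∫ t in 0..‖ξ‖, t ^ (p - 1)) ∂ν
      = ENNReal.ofReal ((∫ ξ in closedBall 0 ρ, ‖ξ‖ ^ p * h ξ ∂μ) / p) := by
    have hprim : ∀ ξ : E, ∫ t in 0..‖ξ‖, t ^ (p - 1) = ‖ξ‖ ^ p / p := fun ξ => by
      rw [intervalIntegral.integral_of_le (norm_nonneg ξ),
        integral_Ioc_rpow_sub_one hp (norm_nonneg ξ)]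
    simp only [hprim]
    rw [← integral_div, ofReal_integral_eq_lintegral_ofReal
      ((integrableOn_closedBall_norm_rpow_mul hh hp ρ).div_const p)
      (ae_of_all _ fun ξ => div_nonneg (mul_nonneg (by positivity) (h0 ξ)) hp.le),
      lintegral_withDensity_eq_lintegral_mul₀ hh.aemeasurable.ennreal_ofReal.restrict
        ((measurable_norm.pow_const p).div_const p).ennreal_ofReal.aemeasurable]
    refine lintegral_congr fun ξ => ?_
    rw [Pi.mul_apply, ← ENNReal.ofReal_mul (h0 ξ)]
    ring_nf
  rw [hlhs, setLIntegral_Ioi_withDensity_closedBall_norm_gt hh h0 hp hρ,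
    ENNReal.ofReal_eq_ofReal_iff
      (div_nonneg (setIntegral_nonneg measurableSet_closedBall fun ξ _ =>
        mul_nonneg (by positivity) (h0 ξ)) hp.le)
      (setIntegral_nonneg measurableSet_Ioc fun t ht => mul_nonneg (Real.rpow_nonneg ht.1.le _)
        (sub_nonneg.2 (ballIntegral_mono hh h0 ht.2)))] at hlayer
  rw [← hlayer]
  field_simp

theorem setIntegral_closedBall_norm_rpow_mul (hh : Integrable h μ) (h0 : 0 ≤ h) {p : ℝ}
    (hp : 0 < p) {ρ : ℝ} (hρ : 0 ≤ ρ) :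
    ∫ ξ in closedBall 0 ρ, ‖ξ‖ ^ p * h ξ ∂μ
      = ρ ^ p * ballIntegral μ h ρ - p * ∫ t in Ioc 0 ρ, t ^ (p - 1) * ballIntegral μ h t := by
  rw [setIntegral_closedBall_norm_rpow_mul_eq_layerCake hh h0 hp hρ]
  simp only [mul_sub]
  rw [integral_sub ((integrableOn_Ioc_rpow_sub_one hp ρ).mul_const _)
    (integrableOn_rpow_mul_ballIntegral hh h0 hp ρ), integral_mul_const,
    integral_Ioc_rpow_sub_one hp hρ]
  field_simp

end BallIntegral

theorem decay_character_fractional_laplacian_general (n : ℕ)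
    (s : ℝ) (hs : 0 < s)
    (v0hat : EuclideanSpace ℝ (Fin n) → ℂ)
    (hL2 : MemLp v0hat 2 volume)
    (r P : ℝ) (hr : -((n : ℝ) / 2) < r) (hP : 0 < P)
    (hlim : Tendsto
      (fun ρ : ℝ => ρ ^ (-2 * r - (n : ℝ)) *
        ∫ ξ in Metric.closedBall (0 : EuclideanSpace ℝ (Fin n)) ρ, ‖v0hat ξ‖ ^ 2)
      (nhdsWithin 0 (Set.Ioi 0)) (nhds P)) :
    -((n : ℝ) / 2) + s < s + r ∧
    ∃ Q : ℝ, 0 < Q ∧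
      Tendsto
        (fun ρ : ℝ => ρ ^ (-2 * (s + r) - (n : ℝ)) *
          ∫ ξ in Metric.closedBall (0 : EuclideanSpace ℝ (Fin n)) ρ,
            ‖(‖ξ‖ ^ s : ℝ) * ‖v0hat ξ‖‖ ^ 2)
        (nhdsWithin 0 (Set.Ioi 0)) (nhds Q) := by
  have hh : Integrable (fun ξ => ‖v0hat ξ‖ ^ 2) := hL2.norm.integrable_sq
  have h0 : 0 ≤ fun ξ => ‖v0hat ξ‖ ^ 2 := fun ξ => sq_nonneg _
  have hβ : 0 < 2 * r + n := by linarith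
  have hp : 0 < 2 * s := by linarith
  refine ⟨by linarith, (2 * r + n) / (2 * r + n + 2 * s) * P, by positivity, ?_⟩
  have hsymbol : ∀ ξ : EuclideanSpace ℝ (Fin n),
      ‖(‖ξ‖ ^ s : ℝ) * ‖v0hat ξ‖‖ ^ 2 = ‖ξ‖ ^ (2 * s) * ‖v0hat ξ‖ ^ 2 := fun ξ => by
    rw [Real.norm_of_nonneg (by positivity), mul_pow, ← Real.rpow_natCast,
      ← Real.rpow_mul (norm_nonneg ξ), mul_comm s, Nat.cast_ofNat]
  simp only [hsymbol, show -2 * (s + r) - (n : ℝ) = -(2 * r + n + 2 * s) by ring]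
  refine (tendsto_rpow_neg_mul_layerCake (β := 2 * r + n) (by linarith)
    (integrableOn_rpow_mul_ballIntegral hh h0 hp 1) ?_).congr' ?_
  · rw [show -(2 * r + n) = -2 * r - (n : ℝ) by ring]
    exact hlim
  · filter_upwards [self_mem_nhdsWithin] with ρ (hρ : 0 < ρ)
    rw [setIntegral_closedBall_norm_rpow_mul hh h0 hp hρ.le]

theorem decay_character_fractional_laplacian (n : ℕ) (hn : 0 < n)
    (s : ℝ) (hs : 0 < s)
    (v0hat : EuclideanSpace ℝ (Fin n) → ℂ)
    (hL2 : MemLp v0hat 2 volume)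
    (hHs : MemLp (fun ξ : EuclideanSpace ℝ (Fin n) => ‖ξ‖ ^ s * ‖v0hat ξ‖) 2 volume)
    (r P : ℝ) (hr : -((n : ℝ) / 2) < r) (hP : 0 < P)
    (hlim : Tendsto
      (fun ρ : ℝ => ρ ^ (-2 * r - (n : ℝ)) *
        ∫ ξ in Metric.closedBall (0 : EuclideanSpace ℝ (Fin n)) ρ, ‖v0hat ξ‖ ^ 2)
      (nhdsWithin 0 (Set.Ioi 0)) (nhds P)) :
    -((n : ℝ) / 2) + s < s + r ∧
    ∃ Q : ℝ, 0 < Q ∧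
      Tendsto
        (fun ρ : ℝ => ρ ^ (-2 * (s + r) - (n : ℝ)) *
          ∫ ξ in Metric.closedBall (0 : EuclideanSpace ℝ (Fin n)) ρ,
            ‖(‖ξ‖ ^ s : ℝ) * ‖v0hat ξ‖‖ ^ 2)
        (nhdsWithin 0 (Set.Ioi 0)) (nhds Q) :=
  decay_character_fractional_laplacian_general n s hs v0hat hL2 r P hr hP hlim
end

section
/- Let u₀ ∈ H¹_α(ℝⁿ) with decay character r*(u₀) = r* ∈ (-n/2, ∞), and suppose P_{r*}(u₀) > 0. Then there exists C₁ > 0, depending only on μ, α, r*, n and P_{r*}(u₀), such that the solution ū of the linearized equation ∂_t(ū - αΔū) - μΔū = 0 with ū(0) = u₀ satisfies ‖ū(t)‖²_{H¹_α(ℝⁿ)} ≥ C₁(t+1)^{-(n/2 + r*)} for all t ≥ 0. -/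
/-
Since `P_r(u₀) > 0`, there is `δ > 0` with `∫_{|ξ| ≤ ρ} |û₀|² ≥ (P/2) ρ^(2r+n)` for `0 < ρ ≤ δ`.
On the ball of radius `ρ = δ / √(t + 1)` one has `|ξ|² t ≤ δ²`, so the multiplier
`exp (-μ|ξ|²t / (1 + α|ξ|²))` is at least `exp (-μδ²)`, while the weight `1 + α|ξ|²` is at least
`1`. Restricting the energy integral to that ball gives at least
`exp (-μδ²)² (P/2) ρ^(2r+n) = C₁ (t + 1)^(-(n/2 + r))`.
-/

noncomputable section
open MeasureTheory Filter

theorem exists_mul_rpow_le_of_tendsto {F : ℝ → ℝ} {a c P : ℝ} (hc : c < P)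
    (h : Tendsto (fun ρ : ℝ => ρ ^ (-a) * F ρ) (nhdsWithin 0 (Set.Ioi 0)) (nhds P)) :
    ∃ δ > 0, ∀ ρ ∈ Set.Ioc 0 δ, c * ρ ^ a ≤ F ρ := by
  obtain ⟨δ, hδ, hsub⟩ := mem_nhdsGT_iff_exists_Ioc_subset.1 (h.eventually (eventually_gt_nhds hc))
  refine ⟨δ, hδ, fun ρ hρ => ?_⟩
  have hlt : c < ρ ^ (-a) * F ρ := hsub hρ
  rw [Real.rpow_neg hρ.1.le] at hlt
  exact ((lt_inv_mul_iff₀' (Real.rpow_pos_of_pos hρ.1 a)).1 hlt).le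

theorem div_sqrt_rpow {x s : ℝ} (hx : 0 ≤ x) (hs : 0 ≤ s) (a : ℝ) :
    (x / √s) ^ a = x ^ a * s ^ (-(a / 2)) := by
  rw [Real.div_rpow hx (Real.sqrt_nonneg s), Real.sqrt_eq_rpow, ← Real.rpow_mul hs,
    Real.rpow_neg hs, div_eq_mul_inv, one_div_mul_eq_div]

section Multiplier

variable {E : Type*} [NormedAddCommGroup E]

def pseudoParabolicMultiplier (α μ t : ℝ) (ξ : E) : ℝ :=
  Real.exp (-(μ * ‖ξ‖ ^ 2) * t / (1 + α * ‖ξ‖ ^ 2))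

variable {α μ t : ℝ}

theorem pseudoParabolicMultiplier_pos (ξ : E) : 0 < pseudoParabolicMultiplier α μ t ξ :=
  Real.exp_pos _

theorem continuous_pseudoParabolicMultiplier (hα : 0 ≤ α) :
    Continuous (pseudoParabolicMultiplier (E := E) α μ t) := by
  unfold pseudoParabolicMultiplier
  fun_prop (disch := intro; positivity)

theorem pseudoParabolicMultiplier_le_one (hα : 0 ≤ α) (hμ : 0 ≤ μ) (ht : 0 ≤ t) (ξ : E) :
    pseudoParabolicMultiplier α μ t ξ ≤ 1 := by
  refine Real.exp_le_one_iff.2 (div_nonpos_of_nonpos_of_nonneg ?_ (by positivity))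
  rw [neg_mul]
  exact neg_nonpos.2 (by positivity)

theorem exp_neg_mul_le_pseudoParabolicMultiplier (hα : 0 ≤ α) (hμ : 0 ≤ μ) (ht : 0 ≤ t)
    {ξ : E} {R : ℝ} (hξ : ‖ξ‖ ^ 2 * t ≤ R) :
    Real.exp (-(μ * R)) ≤ pseudoParabolicMultiplier α μ t ξ := by
  refine Real.exp_le_exp.2 ?_
  rw [neg_mul, neg_div, neg_le_neg_iff]
  calc μ * ‖ξ‖ ^ 2 * t / (1 + α * ‖ξ‖ ^ 2) ≤ μ * ‖ξ‖ ^ 2 * t :=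
        div_le_self (by positivity) (le_add_of_nonneg_right (by positivity))
    _ ≤ μ * R := by rw [mul_assoc]; exact mul_le_mul_of_nonneg_left hξ hμ

theorem exp_sq_mul_le_one_add_mul_norm_sq_mul_smul {F : Type*} [NormedAddCommGroup F]
    [NormedSpace ℝ F] (hα : 0 ≤ α) (hμ : 0 ≤ μ) (ht : 0 ≤ t) {ξ : E} {R : ℝ}
    (hξ : ‖ξ‖ ^ 2 * t ≤ R) (v : F) :
    Real.exp (-(μ * R)) ^ 2 * ‖v‖ ^ 2 ≤
      (1 + α * ‖ξ‖ ^ 2) * ‖pseudoParabolicMultiplier α μ t ξ • v‖ ^ 2 := by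
  rw [norm_smul, Real.norm_of_nonneg (pseudoParabolicMultiplier_pos ξ).le, mul_pow]
  calc Real.exp (-(μ * R)) ^ 2 * ‖v‖ ^ 2
      ≤ pseudoParabolicMultiplier α μ t ξ ^ 2 * ‖v‖ ^ 2 := by
        gcongr
        exact exp_neg_mul_le_pseudoParabolicMultiplier hα hμ ht hξ
    _ ≤ _ := le_mul_of_one_le_left (by positivity) (le_add_of_nonneg_right (by positivity))

end Multiplier

section Energy

variable {E F : Type*} [NormedAddCommGroup E] [MeasurableSpace E] [NormedAddCommGroup F]
  {ν : Measure E} {f : E → F}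

theorem integrable_one_add_mul_norm_sq_mul (hf : MemLp f 2 ν)
    (hgrad : MemLp (fun ξ => ‖ξ‖ * ‖f ξ‖) 2 ν) (α : ℝ) :
    Integrable (fun ξ => (1 + α * ‖ξ‖ ^ 2) * ‖f ξ‖ ^ 2) ν := by
  have h := ((memLp_two_iff_integrable_sq_norm hf.1).1 hf).add (hgrad.integrable_sq.const_mul α)
  refine h.congr (ae_of_all _ fun ξ => ?_)
  simp only [Pi.add_apply]
  ring

variable [OpensMeasurableSpace E] [NormedSpace ℝ F]

theorem integrable_one_add_mul_norm_sq_mul_smul (hf : MemLp f 2 ν)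
    (hgrad : MemLp (fun ξ => ‖ξ‖ * ‖f ξ‖) 2 ν) (α : ℝ) {m : E → ℝ}
    (hm : Continuous m) (hm1 : ∀ ξ, |m ξ| ≤ 1) :
    Integrable (fun ξ => (1 + α * ‖ξ‖ ^ 2) * ‖m ξ • f ξ‖ ^ 2) ν := by
  refine (integrable_one_add_mul_norm_sq_mul hf hgrad α).norm.mono' ?_ (ae_of_all _ fun ξ => ?_)
  · have hfm := hf.aestronglyMeasurable
    fun_prop
  · simp only [norm_mul, norm_pow, norm_norm]
    gcongr
    rw [norm_smul, Real.norm_eq_abs]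
    exact mul_le_of_le_one_left (norm_nonneg _) (hm1 ξ)

variable {α μ t : ℝ}

theorem exp_sq_mul_setIntegral_closedBall_le (hα : 0 ≤ α) (hμ : 0 ≤ μ) (ht : 0 ≤ t)
    (hf : MemLp f 2 ν) (hgrad : MemLp (fun ξ => ‖ξ‖ * ‖f ξ‖) 2 ν) {ρ R : ℝ} (hρ : ρ ^ 2 * t ≤ R) :
    Real.exp (-(μ * R)) ^ 2 * ∫ ξ in Metric.closedBall 0 ρ, ‖f ξ‖ ^ 2 ∂ν ≤
      ∫ ξ, (1 + α * ‖ξ‖ ^ 2) * ‖pseudoParabolicMultiplier α μ t ξ • f ξ‖ ^ 2 ∂ν := by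
  have hint := integrable_one_add_mul_norm_sq_mul_smul hf hgrad α
    (continuous_pseudoParabolicMultiplier (μ := μ) (t := t) hα) fun ξ => by
      rw [abs_of_pos (pseudoParabolicMultiplier_pos ξ)]
      exact pseudoParabolicMultiplier_le_one hα hμ ht ξ
  rw [← integral_const_mul]
  calc ∫ ξ in Metric.closedBall 0 ρ, Real.exp (-(μ * R)) ^ 2 * ‖f ξ‖ ^ 2 ∂ν
      ≤ ∫ ξ in Metric.closedBall 0 ρ,
          (1 + α * ‖ξ‖ ^ 2) * ‖pseudoParabolicMultiplier α μ t ξ • f ξ‖ ^ 2 ∂ν := by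
        refine setIntegral_mono_on (((memLp_two_iff_integrable_sq_norm hf.1).1 hf).const_mul _
          |>.integrableOn) hint.integrableOn measurableSet_closedBall fun ξ hξ => ?_
        have hξρ : ‖ξ‖ ≤ ρ := by rwa [Metric.mem_closedBall, dist_zero_right] at hξ
        refine exp_sq_mul_le_one_add_mul_norm_sq_mul_smul hα hμ ht (le_trans ?_ hρ) (f ξ)
        gcongr
    _ ≤ _ := setIntegral_le_integral hint (ae_of_all _ fun ξ => by positivity)

end Energy

/- `u0hat` is `û₀`; by Plancherel the integral on the right is `‖ū(t)‖²_{H¹_α}` up to the factor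
`(2π)^n`, which is absorbed into `C₁`. -/
theorem linear_decay_lower_bound_general (n : ℕ) (α μ : ℝ) (hα : 0 < α) (hμ : 0 < μ)
    (u0hat : EuclideanSpace ℝ (Fin n) → EuclideanSpace ℂ (Fin n))
    (hL2 : MemLp u0hat 2 volume)
    (hH1 : MemLp (fun ξ : EuclideanSpace ℝ (Fin n) => ‖ξ‖ * ‖u0hat ξ‖) 2 volume)
    (r P : ℝ) (hP : 0 < P)
    (hlim : Tendsto
      (fun ρ : ℝ => ρ ^ (-2 * r - (n : ℝ)) *
        ∫ ξ in Metric.closedBall (0 : EuclideanSpace ℝ (Fin n)) ρ, ‖u0hat ξ‖ ^ 2)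
      (nhdsWithin 0 (Set.Ioi 0)) (nhds P)) :
    ∃ C₁ : ℝ, 0 < C₁ ∧ ∀ t : ℝ, 0 ≤ t →
      C₁ * (t + 1) ^ (-((n : ℝ) / 2 + r)) ≤
        ∫ ξ, (1 + α * ‖ξ‖ ^ 2) *
          ‖Real.exp (-(μ * ‖ξ‖ ^ 2) * t / (1 + α * ‖ξ‖ ^ 2)) • u0hat ξ‖ ^ 2 := by
  rw [show -2 * r - (n : ℝ) = -(2 * r + n) by ring] at hlim
  obtain ⟨δ, hδ, hball⟩ := exists_mul_rpow_le_of_tendsto (half_lt_self hP) hlim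
  refine ⟨Real.exp (-(μ * δ ^ 2)) ^ 2 * (P / 2) * δ ^ (2 * r + n), by positivity, fun t ht => ?_⟩
  have hsqrt : 1 ≤ √(t + 1) := Real.one_le_sqrt.2 (by linarith)
  set ρ := δ / √(t + 1)
  have hρ : ρ ∈ Set.Ioc 0 δ := ⟨by positivity, div_le_self hδ.le hsqrt⟩
  have hρt : ρ ^ 2 * t ≤ δ ^ 2 := by
    rw [div_pow, Real.sq_sqrt (by linarith), div_mul_eq_mul_div, div_le_iff₀ (by linarith)]
    nlinarith [sq_nonneg δ]
  calc Real.exp (-(μ * δ ^ 2)) ^ 2 * (P / 2) * δ ^ (2 * r + n) * (t + 1) ^ (-((n : ℝ) / 2 + r))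
      = Real.exp (-(μ * δ ^ 2)) ^ 2 * (P / 2 * ρ ^ (2 * r + n)) := by
        rw [div_sqrt_rpow hδ.le (by linarith), show (2 * r + n) / 2 = (n : ℝ) / 2 + r by ring]
        ring
    _ ≤ Real.exp (-(μ * δ ^ 2)) ^ 2 * ∫ ξ in Metric.closedBall 0 ρ, ‖u0hat ξ‖ ^ 2 := by
        gcongr
        exact hball ρ hρ
    _ ≤ _ := exp_sq_mul_setIntegral_closedBall_le hα.le hμ.le ht hL2 hH1 hρt

theorem linear_decay_lower_bound (n : ℕ) (hn : 0 < n) (α μ : ℝ) (hα : 0 < α) (hμ : 0 < μ)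
    (u0hat : EuclideanSpace ℝ (Fin n) → EuclideanSpace ℂ (Fin n))
    (hL2 : MemLp u0hat 2 volume)
    (hH1 : MemLp (fun ξ : EuclideanSpace ℝ (Fin n) => ‖ξ‖ * ‖u0hat ξ‖) 2 volume)
    (r P : ℝ) (hr : -((n : ℝ) / 2) < r) (hP : 0 < P)
    (hlim : Tendsto
      (fun ρ : ℝ => ρ ^ (-2 * r - (n : ℝ)) *
        ∫ ξ in Metric.closedBall (0 : EuclideanSpace ℝ (Fin n)) ρ, ‖u0hat ξ‖ ^ 2)
      (nhdsWithin 0 (Set.Ioi 0)) (nhds P)) :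
    ∃ C₁ : ℝ, 0 < C₁ ∧ ∀ t : ℝ, 0 ≤ t →
      C₁ * (t + 1) ^ (-((n : ℝ) / 2 + r)) ≤
        ∫ ξ, (1 + α * ‖ξ‖ ^ 2) *
          ‖Real.exp (-(μ * ‖ξ‖ ^ 2) * t / (1 + α * ‖ξ‖ ^ 2)) • u0hat ξ‖ ^ 2 :=
  linear_decay_lower_bound_general n α μ hα hμ u0hat hL2 hH1 r P hP hlim
end
end

section
/- Let u₀ ∈ H¹_α(ℝⁿ) with decay character r*(u₀) = r* ∈ (-n/2, ∞) and P_{r*}(u₀) < ∞. Then there exist C₂, C₃ > 0 such that the solution ū of ∂_t(ū - αΔū) - μΔū = 0 with ū(0) = u₀ satisfies ‖ū(t)‖²_{H¹_α(ℝⁿ)} ≤ C₂(t+C₃)^{-(n/2 + r*)} for all t ≥ 0. -/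
/-!
On the Fourier side the energy at time `t` is `∫ m_t(|ξ|²) |û₀(ξ)|² dξ` with the symbol
`m_t(y) = (1 + α y) e^{-2μyt/(1+αy)}`. With `c = 2μ/(1+α)`, the symbol is at most
`(1 + α) e^{-ct|ξ|²}` for `|ξ| ≤ 1` and at most `(1 + α|ξ|²) e^{-ct}` for `|ξ| ≥ 1`.

The decay character gives `∫_{|ξ|≤ρ} |û₀|² ≤ K ρ^s` for all `ρ > 0`, where `s = n + 2r > 0`.
Splitting at `|ξ| = τ^{-1/2}`, bounding `e^{-τ|ξ|²} ≤ m! (τ|ξ|²)^{-m}` with `2m > s` outside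
the ball, and summing the weight `|ξ|^{-2m}` over dyadic shells turns this into
`∫ e^{-τ|ξ|²} |û₀|² ≤ C τ^{-s/2}`. The high frequencies decay exponentially in `t`, and the
energy never exceeds its initial value, which gives the rate `(t + 1)^{-s/2}`.
-/

open MeasureTheory Filter Set Real Metric
open scoped Nat Topology ENNReal Function

theorem exp_neg_le_factorial_div_pow {x : ℝ} (hx : 0 < x) (m : ℕ) : exp (-x) ≤ m ! / x ^ m := by
  rw [exp_neg, inv_le_comm₀ (exp_pos x) (by positivity), inv_div]
  exact pow_div_factorial_le_exp x hx.le m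

theorem exp_neg_mul_sq_le_factorial_mul_rpow {τ y : ℝ} (hτ : 0 < τ) (hy : 0 < y) (m : ℕ) :
    exp (-(τ * y ^ 2)) ≤ m ! * τ ^ (-(m : ℝ)) * y ^ (-(2 * m : ℝ)) := by
  refine (exp_neg_le_factorial_div_pow (by positivity) m).trans_eq ?_
  rw [rpow_neg hτ.le, rpow_neg hy.le, show (2 * m : ℝ) = ((2 * m : ℕ) : ℝ) by push_cast; ring,
    rpow_natCast, rpow_natCast, pow_mul, mul_pow]
  field_simp

theorem exists_exp_neg_mul_le_mul_rpow_neg (a : ℝ) {c : ℝ} (hc : 0 < c) :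
    ∃ C, 0 ≤ C ∧ ∀ t ≥ 1, exp (-(c * t)) ≤ C * t ^ (-a) := by
  refine ⟨⌈a⌉₊ ! / c ^ ⌈a⌉₊, by positivity, fun t ht => ?_⟩
  have ht₀ : 0 < t := by linarith
  calc exp (-(c * t)) ≤ ⌈a⌉₊ ! / (c * t) ^ ⌈a⌉₊ := exp_neg_le_factorial_div_pow (by positivity) _
    _ = ⌈a⌉₊ ! / c ^ ⌈a⌉₊ * t ^ (-(⌈a⌉₊ : ℝ)) := by
      rw [rpow_neg ht₀.le, rpow_natCast, mul_pow]; field_simp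
    _ ≤ ⌈a⌉₊ ! / c ^ ⌈a⌉₊ * t ^ (-a) := by
      gcongr
      exact Nat.le_ceil a

theorem exists_le_mul_rpow_of_tendsto {G : ℝ → ℝ} {s P M : ℝ} (hs : 0 ≤ s) (hM : 0 ≤ M)
    (hGM : ∀ ρ, G ρ ≤ M) (hG : Tendsto (fun ρ => ρ ^ (-s) * G ρ) (𝓝[>] 0) (𝓝 P)) :
    ∃ K, 0 ≤ K ∧ ∀ ρ > 0, G ρ ≤ K * ρ ^ s := by
  obtain ⟨ε, hε : 0 < ε, hsmall⟩ := mem_nhdsGT_iff_exists_Ioo_subset.1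
    (hG.eventually (eventually_lt_nhds (lt_add_one P)))
  refine ⟨max (P + 1) (M * ε ^ (-s)), by positivity, fun ρ hρ => ?_⟩
  rcases lt_or_ge ρ ε with hρε | hερ
  · have h := hsmall ⟨hρ, hρε⟩
    rw [mem_ofPred_eq, rpow_neg hρ.le, inv_mul_lt_iff₀ (by positivity)] at h
    nlinarith [le_max_left (P + 1) (M * ε ^ (-s)), rpow_pos_of_pos hρ s]
  · calc G ρ ≤ M * ε ^ (-s) * ε ^ s := by
          rw [mul_assoc, ← rpow_add hε, neg_add_cancel, rpow_zero, mul_one]; exact hGM ρ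
      _ ≤ max (P + 1) (M * ε ^ (-s)) * ρ ^ s := by gcongr; exact le_max_right _ _

theorem exists_le_mul_add_one_rpow_neg {g : ℝ → ℝ} {a M A : ℝ} (ha : 0 ≤ a)
    (hM : ∀ t ≥ 0, g t ≤ M) (hA : ∀ t ≥ 1, g t ≤ A * t ^ (-a)) :
    ∃ C, 0 < C ∧ ∀ t ≥ 0, g t ≤ C * (t + 1) ^ (-a) := by
  set B := max (max M A) 1
  have h2 : (2 : ℝ) ^ a * (2 : ℝ) ^ (-a) = 1 := by
    rw [← rpow_add two_pos, add_neg_cancel, rpow_zero]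
  refine ⟨2 ^ a * B, by positivity, fun t ht => ?_⟩
  rcases le_or_gt t 1 with ht1 | ht1
  · calc g t ≤ B * (2 ^ a * 2 ^ (-a)) := by
          rw [h2, mul_one]; exact (hM t ht).trans ((le_max_left _ _).trans (le_max_left _ _))
      _ ≤ 2 ^ a * B * (t + 1) ^ (-a) := by
          rw [mul_left_comm, ← mul_assoc]
          exact mul_le_mul_of_nonneg_left
            (rpow_le_rpow_of_nonpos (by linarith) (by linarith) (neg_nonpos.2 ha)) (by positivity)
  · calc g t ≤ B * t ^ (-a) := (hA t ht1.le).trans (by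
          gcongr; exact (le_max_right _ _).trans (le_max_left _ _))
      _ = 2 ^ a * B * (2 * t) ^ (-a) := by
          rw [mul_rpow zero_le_two (by linarith), mul_comm (2 ^ a) B, mul_assoc B,
            ← mul_assoc _ (2 ^ (-a)), h2, one_mul]
      _ ≤ 2 ^ a * B * (t + 1) ^ (-a) := mul_le_mul_of_nonneg_left
          (rpow_le_rpow_of_nonpos (by linarith) (by linarith) (neg_nonpos.2 ha)) (by positivity)

section SmallBallGrowth

variable {E : Type*} [NormedAddCommGroup E] [MeasurableSpace E] [OpensMeasurableSpace E]
  {ν : Measure E} {K s : ℝ}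

theorem setLIntegral_norm_rpow_Ico_le {e : ℝ} (he : e ≤ 0) {a : ℝ} (ha : 0 < a) (b : ℝ) :
    ∫⁻ ξ in (‖·‖) ⁻¹' Ico a b, ENNReal.ofReal (‖ξ‖ ^ e) ∂ν ≤
      ENNReal.ofReal (a ^ e) * ν (closedBall 0 b) :=
  calc ∫⁻ ξ in (‖·‖) ⁻¹' Ico a b, ENNReal.ofReal (‖ξ‖ ^ e) ∂ν
      ≤ ∫⁻ ξ in (‖·‖) ⁻¹' Ico a b, ENNReal.ofReal (a ^ e) ∂ν :=
        setLIntegral_mono' (measurable_norm measurableSet_Ico) fun ξ hξ =>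
          ENNReal.ofReal_le_ofReal (rpow_le_rpow_of_nonpos ha hξ.1 he)
    _ ≤ ENNReal.ofReal (a ^ e) * ν (closedBall 0 b) := by
        rw [setLIntegral_const]
        gcongr
        intro ξ hξ
        simpa using hξ.2.le

theorem setLIntegral_norm_rpow_le_of_measure_closedBall_le (hK : 0 ≤ K) (hs : 0 ≤ s)
    (hball : ∀ ρ > 0, ν (closedBall 0 ρ) ≤ ENNReal.ofReal (K * ρ ^ s)) {e : ℝ} (hse : s + e < 0)
    {ρ : ℝ} (hρ : 0 < ρ) :
    ∫⁻ ξ in {ξ | ρ ≤ ‖ξ‖}, ENNReal.ofReal (‖ξ‖ ^ e) ∂ν ≤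
      ENNReal.ofReal (2 ^ s * K / (1 - 2 ^ (s + e)) * ρ ^ (s + e)) := by
  set q : ℝ := 2 ^ (s + e)
  have hq₀ : 0 ≤ q := by positivity
  have hq₁ : q < 1 := rpow_lt_one_of_one_lt_of_neg one_lt_two hse
  set r : ℕ → ℝ := fun k => 2 ^ k * ρ
  have hr : Monotone r := fun k l hkl => by
    simp only [r]; gcongr; norm_num
  set shell : ℕ → Set E := fun k => (‖·‖) ⁻¹' Ico (r k) (r (k + 1))
  have hcover : {ξ : E | ρ ≤ ‖ξ‖} ⊆ ⋃ k, shell k := by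
    intro ξ (hξ : ρ ≤ ‖ξ‖)
    obtain ⟨k, hk⟩ := exists_nat_pow_near ((one_le_div hρ).2 hξ) one_lt_two
    refine mem_iUnion.2 ⟨k, ?_, ?_⟩
    · simpa [r, le_div_iff₀ hρ] using hk.1
    · simpa [r, div_lt_iff₀ hρ] using hk.2
  have hIco : Pairwise (Disjoint on fun k => Ico (r k) (r (k + 1))) := by
    simpa only [Order.succ_eq_add_one] using hr.pairwise_disjoint_on_Ico_succ
  have hshell (k : ℕ) : ∫⁻ ξ in shell k, ENNReal.ofReal (‖ξ‖ ^ e) ∂ν ≤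
      ENNReal.ofReal (2 ^ s * K * ρ ^ (s + e) * q ^ k) := by
    refine (setLIntegral_norm_rpow_Ico_le (by linarith) (by positivity) _).trans ?_
    grw [hball _ (by positivity), ← ENNReal.ofReal_mul (by positivity)]
    refine ENNReal.ofReal_le_ofReal (le_of_eq ?_)
    have hrk : 0 < r k := by positivity
    have hpow : r k ^ (s + e) = ρ ^ (s + e) * q ^ k := by
      simp only [r, q]; rw [mul_rpow (by positivity) hρ.le, rpow_pow_comm zero_le_two, mul_comm]
    calc r k ^ e * (K * r (k + 1) ^ s) = 2 ^ s * K * (r k ^ s * r k ^ e) := by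
          rw [show r (k + 1) = 2 * r k by simp only [r]; ring, mul_rpow zero_le_two hrk.le]; ring
      _ = 2 ^ s * K * ρ ^ (s + e) * q ^ k := by rw [← rpow_add hrk, hpow]; ring
  calc ∫⁻ ξ in {ξ | ρ ≤ ‖ξ‖}, ENNReal.ofReal (‖ξ‖ ^ e) ∂ν
      ≤ ∫⁻ ξ in ⋃ k, shell k, ENNReal.ofReal (‖ξ‖ ^ e) ∂ν := lintegral_mono_set hcover
    _ = ∑' k, ∫⁻ ξ in shell k, ENNReal.ofReal (‖ξ‖ ^ e) ∂ν :=
        lintegral_iUnion (fun k => measurable_norm measurableSet_Ico)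
          (fun k l hkl => (hIco hkl).preimage _) _
    _ ≤ ∑' k, ENNReal.ofReal (2 ^ s * K * ρ ^ (s + e) * q ^ k) := ENNReal.tsum_le_tsum hshell
    _ = ENNReal.ofReal (2 ^ s * K / (1 - q) * ρ ^ (s + e)) := by
        rw [← ENNReal.ofReal_tsum_of_nonneg (fun k => by positivity)
          ((summable_geometric_of_lt_one hq₀ hq₁).mul_left _), tsum_mul_left,
          tsum_geometric_of_lt_one hq₀ hq₁]
        congr 1
        ring

theorem setLIntegral_exp_neg_mul_sq_norm_le {τ ρ : ℝ} (hτ : 0 < τ) (hρ : 0 < ρ) (m : ℕ) :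
    ∫⁻ ξ in {ξ | ρ ≤ ‖ξ‖}, ENNReal.ofReal (exp (-(τ * ‖ξ‖ ^ 2))) ∂ν ≤
      ENNReal.ofReal (m ! * τ ^ (-(m : ℝ))) *
        ∫⁻ ξ in {ξ | ρ ≤ ‖ξ‖}, ENNReal.ofReal (‖ξ‖ ^ (-(2 * m : ℝ))) ∂ν := by
  rw [← lintegral_const_mul' _ _ ENNReal.ofReal_ne_top]
  refine setLIntegral_mono' (measurableSet_le measurable_const measurable_norm)
    fun ξ (hξ : ρ ≤ ‖ξ‖) => ?_
  rw [← ENNReal.ofReal_mul (by positivity)]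
  exact ENNReal.ofReal_le_ofReal (exp_neg_mul_sq_le_factorial_mul_rpow hτ (hρ.trans_le hξ) m)

theorem exists_lintegral_exp_neg_mul_sq_norm_le (hK : 0 ≤ K) (hs : 0 ≤ s)
    (hball : ∀ ρ > 0, ν (closedBall 0 ρ) ≤ ENNReal.ofReal (K * ρ ^ s)) :
    ∃ C, 0 ≤ C ∧ ∀ τ > 0, ∫⁻ ξ, ENNReal.ofReal (exp (-(τ * ‖ξ‖ ^ 2))) ∂ν ≤
      ENNReal.ofReal (C * τ ^ (-(s / 2))) := by
  obtain ⟨m, hm⟩ := exists_nat_gt (s / 2)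
  set e : ℝ := -(2 * m)
  set B := 2 ^ s * K / (1 - 2 ^ (s + e))
  have hB : 0 ≤ B := div_nonneg (by positivity)
    (sub_nonneg.2 (rpow_le_one_of_one_le_of_nonpos one_le_two (by linarith)))
  refine ⟨K + m ! * B, by positivity, fun τ hτ => ?_⟩
  set ρ := τ ^ (-(1 / 2) : ℝ)
  have hρ : 0 < ρ := by positivity
  have hρs : ρ ^ s = τ ^ (-(s / 2)) := by rw [← rpow_mul hτ.le]; ring_nf
  have hρse : τ ^ (-(m : ℝ)) * ρ ^ (s + e) = τ ^ (-(s / 2)) := by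
    rw [← rpow_mul hτ.le, ← rpow_add hτ]; congr 1; ring
  have hinner : ∫⁻ ξ in closedBall 0 ρ, ENNReal.ofReal (exp (-(τ * ‖ξ‖ ^ 2))) ∂ν ≤
      ENNReal.ofReal (K * τ ^ (-(s / 2))) :=
    calc _ ≤ ∫⁻ ξ in closedBall 0 ρ, 1 ∂ν :=
          lintegral_mono fun ξ =>
            ENNReal.ofReal_le_one.2 (exp_le_one_iff.2 (neg_nonpos.2 (by positivity)))
      _ ≤ _ := by rw [setLIntegral_one, ← hρs]; exact hball ρ hρ
  have houter : ∫⁻ ξ in {ξ | ρ ≤ ‖ξ‖}, ENNReal.ofReal (exp (-(τ * ‖ξ‖ ^ 2))) ∂ν ≤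
      ENNReal.ofReal (m ! * B * τ ^ (-(s / 2))) :=
    calc _ ≤ _ := setLIntegral_exp_neg_mul_sq_norm_le hτ hρ m
      _ ≤ ENNReal.ofReal (m ! * τ ^ (-(m : ℝ))) * ENNReal.ofReal (B * ρ ^ (s + e)) := by
          gcongr
          exact setLIntegral_norm_rpow_le_of_measure_closedBall_le hK hs hball (by linarith) hρ
      _ = _ := by
          rw [← ENNReal.ofReal_mul (by positivity), ← hρse]
          ring_nf
  calc ∫⁻ ξ, ENNReal.ofReal (exp (-(τ * ‖ξ‖ ^ 2))) ∂ν
      ≤ ∫⁻ ξ in closedBall 0 ρ ∪ {ξ | ρ ≤ ‖ξ‖}, ENNReal.ofReal (exp (-(τ * ‖ξ‖ ^ 2))) ∂ν := by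
        rw [← setLIntegral_univ]
        exact lintegral_mono_set fun ξ _ => (le_total ‖ξ‖ ρ).imp (by simpa using ·) id
    _ ≤ _ := lintegral_union_le _ _ _
    _ ≤ ENNReal.ofReal (K * τ ^ (-(s / 2))) + ENNReal.ofReal (m ! * B * τ ^ (-(s / 2))) :=
        add_le_add hinner houter
    _ = _ := by rw [← ENNReal.ofReal_add (by positivity) (by positivity)]; ring_nf

end SmallBallGrowth

/-- At frequency `ξ`, with `y = ‖ξ‖²`, the solution's `H¹_α` energy density at time `t` is
`energyMultiplier α μ t y` times `|û₀(ξ)|²`. -/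
noncomputable def energyMultiplier (α μ t y : ℝ) : ℝ :=
  (1 + α * y) * exp (-(μ * y) * t / (1 + α * y)) ^ 2

section Multiplier

variable {α μ t y : ℝ}

theorem energyMultiplier_mul_norm_sq {F : Type*} [NormedAddCommGroup F] [NormedSpace ℝ F]
    (x : F) : energyMultiplier α μ t y * ‖x‖ ^ 2 =
      (1 + α * y) * ‖exp (-(μ * y) * t / (1 + α * y)) • x‖ ^ 2 := by
  rw [norm_smul, norm_of_nonneg (exp_nonneg _), energyMultiplier]
  ring

theorem measurable_energyMultiplier : Measurable (energyMultiplier α μ t) := by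
  unfold energyMultiplier; fun_prop

theorem energyMultiplier_nonneg (hα : 0 ≤ α) (hy : 0 ≤ y) : 0 ≤ energyMultiplier α μ t y := by
  unfold energyMultiplier; positivity

theorem energyMultiplier_le (hα : 0 ≤ α) (hμ : 0 ≤ μ) (ht : 0 ≤ t) (hy : 0 ≤ y) :
    energyMultiplier α μ t y ≤ 1 + α * y := by
  have hexp : exp (-(μ * y) * t / (1 + α * y)) ≤ 1 :=
    exp_le_one_iff.2 (div_nonpos_of_nonpos_of_nonneg (by nlinarith [mul_nonneg hμ hy])
      (by positivity))
  unfold energyMultiplier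
  calc (1 + α * y) * exp (-(μ * y) * t / (1 + α * y)) ^ 2 ≤ (1 + α * y) * 1 := by
        gcongr; exact pow_le_one₀ (exp_nonneg _) hexp
    _ = 1 + α * y := mul_one _

theorem energyMultiplier_le_add (hα : 0 ≤ α) (hμ : 0 ≤ μ) (ht : 0 ≤ t) (hy : 0 ≤ y) :
    energyMultiplier α μ t y ≤
      (1 + α) * exp (-(2 * μ / (1 + α) * t * y)) + (1 + α * y) * exp (-(2 * μ / (1 + α) * t)) := by
  have hexp : exp (-(μ * y) * t / (1 + α * y)) ^ 2 = exp (-(2 * μ * t) * (y / (1 + α * y))) := by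
    rw [← exp_nat_mul]; congr 1; push_cast; ring
  have hμt : 0 ≤ 2 * μ * t := by positivity
  unfold energyMultiplier
  rw [hexp]
  rcases le_total y 1 with hy1 | hy1
  · have h1 : y / (1 + α) ≤ y / (1 + α * y) := by gcongr; nlinarith
    calc (1 + α * y) * exp (-(2 * μ * t) * (y / (1 + α * y)))
        ≤ (1 + α) * exp (-(2 * μ / (1 + α) * t * y)) := by
          gcongr
          · nlinarith
          · rw [show -(2 * μ / (1 + α) * t * y) = -(2 * μ * t) * (y / (1 + α)) by ring]
            nlinarith
      _ ≤ _ := le_add_of_nonneg_right (by positivity)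
  · have h1 : 1 / (1 + α) ≤ y / (1 + α * y) := by
      rw [div_le_div_iff₀ (by positivity) (by positivity)]; nlinarith
    calc (1 + α * y) * exp (-(2 * μ * t) * (y / (1 + α * y)))
        ≤ (1 + α * y) * exp (-(2 * μ / (1 + α) * t)) := by
          gcongr
          rw [show -(2 * μ / (1 + α) * t) = -(2 * μ * t) * (1 / (1 + α)) by ring]
          nlinarith
      _ ≤ _ := le_add_of_nonneg_left (by positivity)

end Multiplier

section Energy

variable {E F : Type*} [NormedAddCommGroup E] [MeasureSpace E]
  [NormedAddCommGroup F] {α μ : ℝ} {v : E → F}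

theorem integral_energyMultiplier_le (hα : 0 ≤ α) (hμ : 0 ≤ μ)
    (hv : Integrable fun ξ => (1 + α * ‖ξ‖ ^ 2) * ‖v ξ‖ ^ 2) {t : ℝ} (ht : 0 ≤ t) :
    ∫ ξ, energyMultiplier α μ t (‖ξ‖ ^ 2) * ‖v ξ‖ ^ 2 ≤ ∫ ξ, (1 + α * ‖ξ‖ ^ 2) * ‖v ξ‖ ^ 2 :=
  integral_mono_of_nonneg
    (ae_of_all _ fun ξ => mul_nonneg (energyMultiplier_nonneg hα (by positivity)) (by positivity)) hv
    (ae_of_all _ fun ξ =>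
      mul_le_mul_of_nonneg_right (energyMultiplier_le hα hμ ht (by positivity)) (by positivity))

variable [OpensMeasurableSpace E]

theorem lintegral_energyMultiplier_le (hα : 0 ≤ α) (hμ : 0 ≤ μ)
    (hv : AEStronglyMeasurable v) (hv' : Integrable fun ξ => (1 + α * ‖ξ‖ ^ 2) * ‖v ξ‖ ^ 2)
    {t : ℝ} (ht : 0 ≤ t) :
    ∫⁻ ξ, ENNReal.ofReal (energyMultiplier α μ t (‖ξ‖ ^ 2) * ‖v ξ‖ ^ 2) ≤
      ENNReal.ofReal (1 + α) * ∫⁻ ξ, ENNReal.ofReal (exp (-(2 * μ / (1 + α) * t * ‖ξ‖ ^ 2)))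
          ∂(volume.withDensity fun ξ => ENNReal.ofReal (‖v ξ‖ ^ 2)) +
        ENNReal.ofReal (exp (-(2 * μ / (1 + α) * t))) *
          ENNReal.ofReal (∫ ξ, (1 + α * ‖ξ‖ ^ 2) * ‖v ξ‖ ^ 2) := by
  set c := 2 * μ / (1 + α)
  have hpt (ξ : E) : ENNReal.ofReal (energyMultiplier α μ t (‖ξ‖ ^ 2) * ‖v ξ‖ ^ 2) ≤
      ENNReal.ofReal (1 + α) *
          (ENNReal.ofReal (‖v ξ‖ ^ 2) * ENNReal.ofReal (exp (-(c * t * ‖ξ‖ ^ 2)))) +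
        ENNReal.ofReal (exp (-(c * t))) * ENNReal.ofReal ((1 + α * ‖ξ‖ ^ 2) * ‖v ξ‖ ^ 2) := by
    have hmult := energyMultiplier_le_add hα hμ ht (sq_nonneg ‖ξ‖)
    rw [← ENNReal.ofReal_mul (by positivity), ← ENNReal.ofReal_mul (by positivity),
      ← ENNReal.ofReal_mul (by positivity), ← ENNReal.ofReal_add (by positivity) (by positivity)]
    exact ENNReal.ofReal_le_ofReal (by nlinarith [sq_nonneg ‖v ξ‖])
  have hv2 : AEMeasurable fun ξ => ENNReal.ofReal (‖v ξ‖ ^ 2) :=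
    hv.norm.aemeasurable.pow_const 2 |>.ennreal_ofReal
  refine (lintegral_mono hpt).trans_eq ?_
  rw [lintegral_add_left' (by fun_prop), lintegral_const_mul' _ _ ENNReal.ofReal_ne_top,
    lintegral_const_mul' _ _ ENNReal.ofReal_ne_top,
    lintegral_withDensity_eq_lintegral_mul₀ hv2 (by fun_prop),
    ofReal_integral_eq_lintegral_ofReal hv' (ae_of_all _ fun ξ => by positivity)]
  rfl

theorem exists_integral_energyMultiplier_le_mul_rpow {K s : ℝ} (hα : 0 ≤ α) (hμ : 0 < μ)
    (hv : MemLp v 2) (hv' : Integrable fun ξ => (1 + α * ‖ξ‖ ^ 2) * ‖v ξ‖ ^ 2)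
    (hK : 0 ≤ K) (hs : 0 ≤ s) (hball : ∀ ρ > 0, ∫ ξ in closedBall 0 ρ, ‖v ξ‖ ^ 2 ≤ K * ρ ^ s) :
    ∃ A, ∀ t ≥ 1, ∫ ξ, energyMultiplier α μ t (‖ξ‖ ^ 2) * ‖v ξ‖ ^ 2 ≤ A * t ^ (-(s / 2)) := by
  set c := 2 * μ / (1 + α)
  have hc : 0 < c := by positivity
  have hv2 : Integrable fun ξ => ‖v ξ‖ ^ 2 := (memLp_two_iff_integrable_sq_norm hv.1).1 hv
  have hνball (ρ : ℝ) (hρ : ρ > 0) : (volume.withDensity fun ξ => ENNReal.ofReal (‖v ξ‖ ^ 2))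
      (closedBall 0 ρ) ≤ ENNReal.ofReal (K * ρ ^ s) := by
    rw [withDensity_apply _ measurableSet_closedBall, ← ofReal_integral_eq_lintegral_ofReal
      hv2.integrableOn (ae_of_all _ fun ξ => by positivity)]
    exact ENNReal.ofReal_le_ofReal (hball ρ hρ)
  obtain ⟨C₁, hC₁₀, hC₁⟩ := exists_lintegral_exp_neg_mul_sq_norm_le hK hs hνball
  obtain ⟨C₂, hC₂₀, hC₂⟩ := exists_exp_neg_mul_le_mul_rpow_neg (s / 2) hc
  set M := ∫ ξ, (1 + α * ‖ξ‖ ^ 2) * ‖v ξ‖ ^ 2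
  have hM : 0 ≤ M := integral_nonneg fun ξ => by positivity
  refine ⟨(1 + α) * (C₁ * c ^ (-(s / 2))) + C₂ * M, fun t ht => ?_⟩
  have ht₀ : 0 < t := by linarith
  have hlin : ∫⁻ ξ, ENNReal.ofReal (energyMultiplier α μ t (‖ξ‖ ^ 2) * ‖v ξ‖ ^ 2) ≤
      ENNReal.ofReal (((1 + α) * (C₁ * c ^ (-(s / 2))) + C₂ * M) * t ^ (-(s / 2))) := by
    calc _ ≤ _ := lintegral_energyMultiplier_le hα hμ.le hv.1 hv' ht₀.le
      _ ≤ ENNReal.ofReal (1 + α) * ENNReal.ofReal (C₁ * (c * t) ^ (-(s / 2))) +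
          ENNReal.ofReal (C₂ * t ^ (-(s / 2))) * ENNReal.ofReal M := by
        gcongr
        · exact hC₁ _ (by positivity)
        · exact hC₂ t ht
      _ = _ := by
        rw [← ENNReal.ofReal_mul (by positivity), ← ENNReal.ofReal_mul (by positivity),
          ← ENNReal.ofReal_add (by positivity) (by positivity), mul_rpow hc.le ht₀.le]
        ring_nf
  have hmeas : AEStronglyMeasurable fun ξ => energyMultiplier α μ t (‖ξ‖ ^ 2) * ‖v ξ‖ ^ 2 :=
    (measurable_energyMultiplier.comp (by fun_prop)).aestronglyMeasurable.mul (hv.1.norm.pow 2)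
  rw [integral_eq_lintegral_of_nonneg_ae (ae_of_all _ fun ξ =>
    mul_nonneg (energyMultiplier_nonneg hα (by positivity)) (by positivity)) hmeas]
  exact ENNReal.toReal_le_of_le_ofReal (by positivity) hlin

end Energy

theorem linear_decay_upper_bound_general (n : ℕ) (α μ : ℝ) (hα : 0 < α) (hμ : 0 < μ)
    (u0hat : EuclideanSpace ℝ (Fin n) → EuclideanSpace ℂ (Fin n))
    (hL2 : MemLp u0hat 2 volume)
    (hH1 : MemLp (fun ξ : EuclideanSpace ℝ (Fin n) => ‖ξ‖ * ‖u0hat ξ‖) 2 volume)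
    (r P : ℝ) (hr : -((n : ℝ) / 2) < r)
    (hlim : Tendsto
      (fun ρ : ℝ => ρ ^ (-2 * r - (n : ℝ)) *
        ∫ ξ in Metric.closedBall (0 : EuclideanSpace ℝ (Fin n)) ρ, ‖u0hat ξ‖ ^ 2)
      (nhdsWithin 0 (Set.Ioi 0)) (nhds P)) :
    ∃ C₂ C₃ : ℝ, 0 < C₂ ∧ 0 < C₃ ∧ ∀ t : ℝ, 0 ≤ t →
      (∫ ξ, (1 + α * ‖ξ‖ ^ 2) *
          ‖Real.exp (-(μ * ‖ξ‖ ^ 2) * t / (1 + α * ‖ξ‖ ^ 2)) • u0hat ξ‖ ^ 2) ≤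
        C₂ * (t + C₃) ^ (-((n : ℝ) / 2 + r)) := by
  set s : ℝ := n + 2 * r
  have hs : 0 < s := by linarith
  have hL2' : Integrable fun ξ => ‖u0hat ξ‖ ^ 2 := (memLp_two_iff_integrable_sq_norm hL2.1).1 hL2
  have hH1' : Integrable fun ξ => (1 + α * ‖ξ‖ ^ 2) * ‖u0hat ξ‖ ^ 2 :=
    (hL2'.add (((memLp_two_iff_integrable_sq hH1.1).1 hH1).const_mul α)).congr
      (ae_of_all _ fun ξ => by simp only [Pi.add_apply]; ring)
  obtain ⟨K, hK, hball⟩ := exists_le_mul_rpow_of_tendsto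
    (G := fun ρ => ∫ ξ in closedBall 0 ρ, ‖u0hat ξ‖ ^ 2) hs.le
    (integral_nonneg fun ξ => by positivity)
    (fun ρ => setIntegral_le_integral hL2' (ae_of_all _ fun ξ => by positivity))
    (by simpa only [show -2 * r - (n : ℝ) = -s by ring] using hlim)
  obtain ⟨A, hA⟩ := exists_integral_energyMultiplier_le_mul_rpow hα.le hμ hL2 hH1' hK hs.le hball
  obtain ⟨C, hC, hCt⟩ := exists_le_mul_add_one_rpow_neg (half_pos hs).le
    (fun t ht => integral_energyMultiplier_le hα.le hμ.le hH1' ht) hA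
  refine ⟨C, 1, hC, one_pos, fun t ht => ?_⟩
  simpa only [energyMultiplier_mul_norm_sq, show -((n : ℝ) / 2 + r) = -(s / 2) by ring]
    using hCt t ht

theorem linear_decay_upper_bound (n : ℕ) (hn : 0 < n) (α μ : ℝ) (hα : 0 < α) (hμ : 0 < μ)
    (u0hat : EuclideanSpace ℝ (Fin n) → EuclideanSpace ℂ (Fin n))
    (hL2 : MemLp u0hat 2 volume)
    (hH1 : MemLp (fun ξ : EuclideanSpace ℝ (Fin n) => ‖ξ‖ * ‖u0hat ξ‖) 2 volume)
    (r P : ℝ) (hr : -((n : ℝ) / 2) < r) (hP : 0 < P)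
    (hlim : Tendsto
      (fun ρ : ℝ => ρ ^ (-2 * r - (n : ℝ)) *
        ∫ ξ in Metric.closedBall (0 : EuclideanSpace ℝ (Fin n)) ρ, ‖u0hat ξ‖ ^ 2)
      (nhdsWithin 0 (Set.Ioi 0)) (nhds P)) :
    ∃ C₂ C₃ : ℝ, 0 < C₂ ∧ 0 < C₃ ∧ ∀ t : ℝ, 0 ≤ t →
      (∫ ξ, (1 + α * ‖ξ‖ ^ 2) *
          ‖Real.exp (-(μ * ‖ξ‖ ^ 2) * t / (1 + α * ‖ξ‖ ^ 2)) • u0hat ξ‖ ^ 2) ≤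
        C₂ * (t + C₃) ^ (-((n : ℝ) / 2 + r)) :=
  linear_decay_upper_bound_general n α μ hα hμ u0hat hL2 hH1 r P hr hlim
end

section
/- Let u₀ ∈ H¹_α(ℝ³) with div u₀ = 0, decay character r*(u₀) = r* ∈ (−3/2, 1), and suppose u is a weak solution of the second-grade fluid equations with data u₀ satisfying ‖u(t) − ū(t)‖²_{H¹_α} ≤ C_w (t+1)^{−min{5/2 + (3/2)r*, 5/2}}, where ū is the linear solution satisfying ‖ū(t)‖²_{H¹_α} ≥ C₁(t+1)^{−(3/2+r*)}. Then there exists C > 0 and T ≥ 0 such that ‖u(t)‖²_{H¹_α} ≥ C(t+1)^{−(3/2+r*)} for all t ≥ T. -/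
/- STATEMENT 18: Lower bound for solutions via asymptotic equivalence.
   Working with the trajectories t ↦ u(t), ū(t) in the Hilbert space H¹_α(ℝ³)
   (abstracted as a normed space H, with ‖·‖ the H¹_α norm): if
   ‖u(t) − ū(t)‖² ≤ C_w (t+1)^{−min{5/2+(3/2)r*, 5/2}} and
   ‖ū(t)‖² ≥ C₁(t+1)^{−(3/2+r*)} for all t ≥ 0, with r* ∈ (−3/2, 1), then there
   exist C > 0 and T ≥ 0 with ‖u(t)‖² ≥ C(t+1)^{−(3/2+r*)} for all t ≥ T. -/

noncomputable section

theorem lower_bound_from_asymptotic_equivalence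
    {H : Type*} [NormedAddCommGroup H]
    (r Cw C₁ : ℝ) (hr1 : -3 / 2 < r) (hr2 : r < 1) (hCw : 0 < Cw) (hC1 : 0 < C₁)
    (u ub : ℝ → H)
    (hdiff : ∀ t : ℝ, 0 ≤ t →
      ‖u t - ub t‖ ^ 2 ≤ Cw * (t + 1) ^ (-(min (5 / 2 + 3 / 2 * r) (5 / 2))))
    (hlin : ∀ t : ℝ, 0 ≤ t →
      C₁ * (t + 1) ^ (-(3 / 2 + r)) ≤ ‖ub t‖ ^ 2) :
    ∃ C : ℝ, 0 < C ∧ ∃ T : ℝ, 0 ≤ T ∧ ∀ t : ℝ, T ≤ t →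
      C * (t + 1) ^ (-(3 / 2 + r)) ≤ ‖u t‖ ^ 2 := by
  set a : ℝ := 3 / 2 + r with ha
  set b : ℝ := min (5 / 2 + 3 / 2 * r) (5 / 2) with hb
  have hd : 0 < b - a := by
    rw [ha, hb]
    rcases le_total (5 / 2 + 3 / 2 * r) (5 / 2) with h | h
    · rw [min_eq_left h]; linarith
    · rw [min_eq_right h]; linarith
  set K : ℝ := 2 * Real.sqrt Cw / Real.sqrt C₁ with hK
  have hsC1 : 0 < Real.sqrt C₁ := Real.sqrt_pos.mpr hC1
  have hsCw : 0 < Real.sqrt Cw := Real.sqrt_pos.mpr hCw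
  have hKpos : 0 < K := by positivity
  refine ⟨C₁ / 4, by positivity, max 0 (K ^ (2 / (b - a)) - 1), le_max_left _ _, ?_⟩
  intro t ht
  have ht0 : 0 ≤ t := le_trans (le_max_left _ _) ht
  have htp : (0:ℝ) < t + 1 := by linarith
  have hK1 : K ^ (2 / (b - a)) ≤ t + 1 := by
    have := le_trans (le_max_right 0 (K ^ (2 / (b - a)) - 1)) ht
    linarith
  -- K ≤ (t+1)^((b-a)/2)
  have hKle : K ≤ (t + 1) ^ ((b - a) / 2) := by
    have h1 : (K ^ (2 / (b - a))) ^ ((b - a) / 2) ≤ (t + 1) ^ ((b - a) / 2) :=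
      Real.rpow_le_rpow (by positivity) hK1 (by positivity)
    have h2 : (K ^ (2 / (b - a))) ^ ((b - a) / 2) = K := by
      rw [← Real.rpow_mul hKpos.le,
        show (2 / (b - a)) * ((b - a) / 2) = 1 by field_simp, Real.rpow_one]
    linarith [h1, h2.symm.le]
  -- key scalar inequality
  have hkey : Real.sqrt Cw * (t + 1) ^ (-b / 2) ≤ Real.sqrt C₁ / 2 * (t + 1) ^ (-a / 2) := by
    have hsplit : (t + 1) ^ (-a / 2) = (t + 1) ^ (-b / 2) * (t + 1) ^ ((b - a) / 2) := by
      rw [← Real.rpow_add htp]; congr 1; ring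
    rw [hsplit]
    have hpos : (0:ℝ) < (t + 1) ^ (-b / 2) := Real.rpow_pos_of_pos htp _
    have : Real.sqrt C₁ / 2 * K ≤ Real.sqrt C₁ / 2 * (t + 1) ^ ((b - a) / 2) :=
      mul_le_mul_of_nonneg_left hKle (by positivity)
    have hKeq : Real.sqrt C₁ / 2 * K = Real.sqrt Cw := by
      rw [hK]; field_simp
    calc Real.sqrt Cw * (t + 1) ^ (-b / 2)
        = (Real.sqrt C₁ / 2 * K) * (t + 1) ^ (-b / 2) := by rw [hKeq]
      _ ≤ (Real.sqrt C₁ / 2 * (t + 1) ^ ((b - a) / 2)) * (t + 1) ^ (-b / 2) :=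
          mul_le_mul_of_nonneg_right this hpos.le
      _ = Real.sqrt C₁ / 2 * ((t + 1) ^ (-b / 2) * (t + 1) ^ ((b - a) / 2)) := by ring
  -- lower bound on ‖ub t‖
  have e1 : (Real.sqrt C₁ * (t + 1) ^ (-a / 2)) ^ 2 = C₁ * (t + 1) ^ (-a) := by
    rw [mul_pow, Real.sq_sqrt hC1.le, ← Real.rpow_natCast ((t + 1) ^ (-a / 2)) 2,
      ← Real.rpow_mul htp.le]
    norm_num
  have h1 : Real.sqrt C₁ * (t + 1) ^ (-a / 2) ≤ ‖ub t‖ := by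
    have hlin' := hlin t ht0
    rw [← e1] at hlin'
    calc Real.sqrt C₁ * (t + 1) ^ (-a / 2)
        = Real.sqrt ((Real.sqrt C₁ * (t + 1) ^ (-a / 2)) ^ 2) :=
          (Real.sqrt_sq (by positivity)).symm
      _ ≤ Real.sqrt (‖ub t‖ ^ 2) := Real.sqrt_le_sqrt hlin'
      _ = ‖ub t‖ := Real.sqrt_sq (norm_nonneg _)
  -- upper bound on ‖u t - ub t‖
  have e2 : (Real.sqrt Cw * (t + 1) ^ (-b / 2)) ^ 2 = Cw * (t + 1) ^ (-b) := by
    rw [mul_pow, Real.sq_sqrt hCw.le, ← Real.rpow_natCast ((t + 1) ^ (-b / 2)) 2,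
      ← Real.rpow_mul htp.le]
    norm_num
  have h2 : ‖u t - ub t‖ ≤ Real.sqrt Cw * (t + 1) ^ (-b / 2) := by
    have hdiff' := hdiff t ht0
    rw [← e2] at hdiff'
    calc ‖u t - ub t‖ = Real.sqrt (‖u t - ub t‖ ^ 2) := (Real.sqrt_sq (norm_nonneg _)).symm
      _ ≤ Real.sqrt ((Real.sqrt Cw * (t + 1) ^ (-b / 2)) ^ 2) := Real.sqrt_le_sqrt hdiff'
      _ = Real.sqrt Cw * (t + 1) ^ (-b / 2) := Real.sqrt_sq (by positivity)
  -- combine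
  have htri : ‖ub t‖ - ‖u t - ub t‖ ≤ ‖u t‖ := by
    have := norm_sub_norm_le (ub t) (u t)
    rw [norm_sub_rev (ub t) (u t)] at this
    linarith
  have hlow : Real.sqrt C₁ / 2 * (t + 1) ^ (-a / 2) ≤ ‖u t‖ := by linarith
  have e3 : (Real.sqrt C₁ / 2 * (t + 1) ^ (-a / 2)) ^ 2 = C₁ / 4 * (t + 1) ^ (-a) := by
    rw [mul_pow, div_pow, Real.sq_sqrt hC1.le, ← Real.rpow_natCast ((t + 1) ^ (-a / 2)) 2,
      ← Real.rpow_mul htp.le]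
    norm_num
  calc C₁ / 4 * (t + 1) ^ (-a) = (Real.sqrt C₁ / 2 * (t + 1) ^ (-a / 2)) ^ 2 := e3.symm
    _ ≤ ‖u t‖ ^ 2 := pow_le_pow_left₀ (by positivity) hlow 2
end
end
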